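/- arXiv:1410.7806 — 5 statements merged into one kernel-verified Lean document; each statement's English description precedes it below -/
import Mathlib

section
/- Let n ≥ 2, let B : ℤ/n → ℝ, and let Y⁰, Y¹, …, Y^{n-1} : ℤ/n → ℝ be rows generated by the lower pentagram map T₁ starting from the axis-aligned pair (∞, B); concretely, assume: Y⁰ = B; for every i ∈ ℤ/n, Y¹(i) is the unique real number z satisfying (B(i−1) − z)·(B(i) − B(i+1)) = (B(i) − B(i−1))·(z − B(i)) (the degenerate six-point cross ratio condition [∞, B(i), B(i−1), z, B(i), B(i+1)] = −1); and for every k with 1 ≤ k ≤ n−2 and every i ∈ ℤ/n, Y^{k+1}(i) is the unique real number z satisfying (Y^{k-1}(i) − Y^k(i))·(Y^k(i−1) − z)·(Y^k(i) − Y^k(i+1)) = −(Y^k(i) − Y^k(i−1))·(z − Y^k(i))·(Y^k(i+1) − Y^{k-1}(i)) (the six-point cross ratio condition [Y^{k-1}(i), Y^k(i), Y^k(i−1), z, Y^k(i), Y^k(i+1)] = −1). Then the last row is constant and equal to the center of mass of B: for every i ∈ ℤ/n, Y^{n-1}(i) = (1/n)·Σ_{j ∈ ℤ/n} B(j). -/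
/-!
Row `k` of the orbit consists of window averages of `B`: for every `i` there are weights
`p = ∑ pᵣ Xʳ` of degree at most `k` with `p(1) = 1` such that the `k + 1` windows of length `k + 1`
containing `i` all have the weighted sum `∑ pᵣ B(t + r) = Y k i`. Letting polynomials act on
functions through the shift operator, two such fits can be paired, because `q ⋆ (p ⋆ B)` and
`p ⋆ (q ⋆ B)` agree: this computes the defect of a fit one window beyond its range in terms of an
extreme coefficient of the other. The cross ratio condition writes
`Y (k+1) i = a Y k (i-1) + c Y k (i+1) + d Y (k-1) i` with `a + c + d = 1` and with weights for
which these defects cancel, so `a p_{i-1} + X (c p_{i+1} + d q_i)` fits `Y (k+1) i`. For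
`k = n - 1` the `n` windows run over all of `ℤ/n`, and summing them gives `n Y (n-1) i = ∑ B`.
Uniqueness of the solutions keeps the extreme coefficients nonzero: it forces neighbouring entries
of a row to differ and every entry to change from one row to the next.
-/

open Finset Polynomial

noncomputable section

namespace LowerPentagram

variable {G K : Type*} [AddCommGroupWithOne G] [Field K]

variable (G K) in
def shift : Module.End K (G → K) := LinearMap.funLeft K K (· + 1)

theorem shift_pow_apply (r : ℕ) (f : G → K) (t : G) : (shift G K ^ r) f t = f (t + r) := by
  induction r generalizing f with
  | zero => simp
  | succ r ih => rw [pow_succ, Module.End.mul_apply, ih]; simp [shift, add_assoc]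

def window (p : K[X]) (f : G → K) : G → K := aeval (shift G K) p f

theorem window_apply (p : K[X]) (f : G → K) (t : G) :
    window p f t = ∑ r ∈ range (p.natDegree + 1), p.coeff r * f (t + r) := by
  simp [window, aeval_eq_sum_range, shift_pow_apply]

theorem window_mul (p q : K[X]) (f : G → K) : window (p * q) f = window p (window q f) := by
  simp [window]

theorem window_add (p q : K[X]) (f : G → K) : window (p + q) f = window p f + window q f := by
  simp [window]

theorem window_C_mul (a : K) (p : K[X]) (f : G → K) : window (C a * p) f = a • window p f := by
  simp [window]

theorem window_X_mul (p : K[X]) (f : G → K) (t : G) : window (X * p) f t = window p f (t + 1) := by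
  simp [window, shift]

theorem window_sub_const (p : K[X]) (f : G → K) (v : K) :
    window p (fun t => f t - v) = fun t => window p f t - p.eval 1 * v := by
  ext t
  simp only [window_apply, mul_sub, sum_sub_distrib, eval_eq_sum_range, one_pow, mul_one, sum_mul]

theorem window_eq_coeff_mul {p : K[X]} {f : G → K} {t : G} {r₀ : ℕ}
    (hf : ∀ r ≤ p.natDegree, r ≠ r₀ → f (t + r) = 0) :
    window p f t = p.coeff r₀ * f (t + r₀) := by
  rw [window_apply, sum_eq_single r₀]
  · exact fun r hr hne => by rw [hf r (Nat.lt_succ_iff.mp (mem_range.mp hr)) hne, mul_zero]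
  · intro hr
    rw [coeff_eq_zero_of_natDegree_lt (by simpa [Nat.lt_succ_iff] using hr), zero_mul]

theorem window_eq_zero {p : K[X]} {f : G → K} {t : G} (hf : ∀ r ≤ p.natDegree, f (t + r) = 0) :
    window p f t = 0 :=
  (window_eq_coeff_mul (r₀ := 0) fun r hr _ => hf r hr).trans
    (by rw [hf 0 (Nat.zero_le _), mul_zero])

theorem sum_window [Fintype G] (p : K[X]) (f : G → K) :
    ∑ x, window p f x = p.eval 1 * ∑ x, f x := by
  simp only [window_apply, eval_eq_sum_range, one_pow, mul_one, sum_mul]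
  rw [sum_comm]
  refine sum_congr rfl fun r _ => ?_
  rw [← mul_sum]
  exact congrArg _ (Equiv.sum_comp (Equiv.addRight (r : G)) f)

/-- Both windows of windows are `window (p * q) f`, up to the normalising constants. -/
theorem coeff_mul_window_sub_eq {p q : K[X]} {f : G → K} {v w : K} {s : G} {c r₀ : ℕ}
    (hp : p.eval 1 = 1) (hq : q.eval 1 = 1)
    (hpv : ∀ r ≤ q.natDegree, r ≠ r₀ → window p f (s + (c + r : ℕ)) = v)
    (hqw : ∀ r ≤ p.natDegree, window q f (s + (c + r : ℕ)) = w) :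
    q.coeff r₀ * (window p f (s + (c + r₀ : ℕ)) - v) = w - v := by
  have hcomm := congrFun (window_mul q p f) (s + c)
  rw [mul_comm, window_mul] at hcomm
  have hqp : window q (fun t => window p f t - v) (s + c) =
      q.coeff r₀ * (window p f (s + (c + r₀ : ℕ)) - v) := by
    rw [window_eq_coeff_mul (r₀ := r₀)]
    · push_cast; rw [add_assoc]
    · intro r hr hne; push_cast at hpv; rw [add_assoc, hpv r hr hne, sub_self]
  have hpq : window p (fun t => window q f t - w) (s + c) = 0 :=
    window_eq_zero fun r hr => by push_cast at hqw; rw [add_assoc, hqw r hr, sub_self]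
  simp only [window_sub_const, hp, hq, one_mul] at hqp hpq
  linear_combination -hqp + hpq - hcomm

structure IsWindowFit (f : G → K) (k : ℕ) (s : G) (v : K) (p : K[X]) : Prop where
  natDegree_le : p.natDegree ≤ k
  eval_one : p.eval 1 = 1
  window_eq : ∀ j ≤ k, window p f (s + j) = v

variable {f : G → K} {k l : ℕ} {s : G} {v w : K} {p q : K[X]}

theorem IsWindowFit.window_eq_add {a j : ℕ} (h : IsWindowFit f k (s + a) v p) (haj : a ≤ j)
    (hjk : j ≤ a + k) : window p f (s + j) = v := by
  obtain ⟨i, rfl⟩ := Nat.exists_eq_add_of_le haj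
  rw [Nat.cast_add, ← add_assoc]
  exact h.window_eq i (by omega)

theorem IsWindowFit.coeff_mul_sub_eq {a b c r₀ : ℕ} (hp : IsWindowFit f k (s + a) v p)
    (hq : IsWindowFit f l (s + b) w q) (hpq : ∀ r ≤ l, r ≠ r₀ → a ≤ c + r ∧ c + r ≤ a + k)
    (hqp : b ≤ c ∧ c + k ≤ b + l) :
    q.coeff r₀ * (window p f (s + (c + r₀ : ℕ)) - v) = w - v :=
  coeff_mul_window_sub_eq hp.eval_one hq.eval_one
    (fun r hr hne => hp.window_eq_add (hpq r (hr.trans hq.natDegree_le) hne).1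
      (hpq r (hr.trans hq.natDegree_le) hne).2)
    (fun r hr => hq.window_eq_add (by omega) (by have := hp.natDegree_le; omega))

theorem IsWindowFit.step {m : ℕ} {vW vC vE vS a b d : K} {pW pC pE pS : K[X]}
    (hW : IsWindowFit f (m + 1) s vW pW) (hC : IsWindowFit f (m + 1) (s + 1) vC pC)
    (hE : IsWindowFit f (m + 1) (s + 2) vE pE) (hS : IsWindowFit f m (s + 2) vS pS)
    (hC₀ : pC.coeff 0 ≠ 0) (hC₁ : pC.coeff (m + 1) ≠ 0)
    (habd : a + b + d = 1) (hWS : a * (vC - vW) + d * (vC - vS) = 0)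
    (hES : b * (vC - vE) + d * (vC - vS) = 0) :
    IsWindowFit f (m + 2) s (a * vW + b * vE + d * vS)
      (C a * pW + X * (C b * pE + C d * pS)) where
  natDegree_le := by
    have hW' : (C a * pW).natDegree ≤ m + 2 :=
      (natDegree_C_mul_le _ _).trans (hW.natDegree_le.trans (Nat.le_succ _))
    have hES' : (C b * pE + C d * pS).natDegree ≤ m + 1 :=
      natDegree_add_le_of_degree_le ((natDegree_C_mul_le _ _).trans hE.natDegree_le)
        ((natDegree_C_mul_le _ _).trans (hS.natDegree_le.trans (Nat.le_succ _)))
    refine natDegree_add_le_of_degree_le hW' ((natDegree_mul_le_of_le natDegree_X_le hES').trans ?_)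
    omega
  eval_one := by
    simp only [eval_add, eval_mul, eval_C, eval_X, hW.eval_one, hE.eval_one, hS.eval_one]
    linear_combination habd
  window_eq j hj := by
    replace hW : IsWindowFit f (m + 1) (s + (0 : ℕ)) vW pW := by simpa using hW
    replace hC : IsWindowFit f (m + 1) (s + (1 : ℕ)) vC pC := by simpa using hC
    replace hE : IsWindowFit f (m + 1) (s + (2 : ℕ)) vE pE := by simpa using hE
    replace hS : IsWindowFit f m (s + (2 : ℕ)) vS pS := by simpa using hS
    have hsplit : window (C a * pW + X * (C b * pE + C d * pS)) f (s + j) =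
        a * window pW f (s + j) + b * window pE f (s + (j + 1 : ℕ))
          + d * window pS f (s + (j + 1 : ℕ)) := by
      simp only [window_add, window_C_mul, window_X_mul, Pi.add_apply, Pi.smul_apply,
        smul_eq_mul, Nat.cast_succ, add_assoc]
    rw [hsplit]
    -- In the two end windows some of `pW`, `pE`, `pS` are read one window beyond their fits;
    -- pairing with `pC` computes these defects, and the weights make them cancel.
    rcases (show j = 0 ∨ (1 ≤ j ∧ j ≤ m + 1) ∨ j = m + 2 by omega) with rfl | hj | rfl
    · have hη := hE.coeff_mul_sub_eq hC (c := 1) (r₀ := 0) (fun r _ _ => by omega) (by omega)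
      have hρ := hS.coeff_mul_sub_eq hC (c := 1) (r₀ := 0) (fun r _ _ => by omega) (by omega)
      have hcancel : b * (window pE f (s + (1 : ℕ)) - vE) + d * (window pS f (s + (1 : ℕ)) - vS)
          = 0 :=
        mul_left_cancel₀ hC₀ (by linear_combination b * hη + d * hρ + hES)
      rw [hW.window_eq_add le_rfl (by omega)]
      linear_combination hcancel
    · rw [hW.window_eq_add (by omega) (by omega), hE.window_eq_add (by omega) (by omega),
        hS.window_eq_add (by omega) (by omega)]
    · have hω := hW.coeff_mul_sub_eq hC (c := 1) (r₀ := m + 1) (fun r _ _ => by omega) (by omega)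
      have hρ := hS.coeff_mul_sub_eq hC (c := 2) (r₀ := m + 1) (fun r _ _ => by omega) (by omega)
      have hcancel : a * (window pW f (s + (1 + (m + 1) : ℕ)) - vW)
          + d * (window pS f (s + (2 + (m + 1) : ℕ)) - vS) = 0 :=
        mul_left_cancel₀ hC₁ (by linear_combination a * hω + d * hρ + hWS)
      rw [hE.window_eq_add (by omega) (by omega)]
      rw [show 1 + (m + 1) = m + 2 by omega, show 2 + (m + 1) = m + 2 + 1 by omega] at hcancel
      linear_combination hcancel

theorem IsWindowFit.coeff_ne_zero {m : ℕ} (hq : IsWindowFit f (m + 1) s w q)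
    (hp : IsWindowFit f m (s + 1) v p) (hwv : w ≠ v) : q.coeff 0 ≠ 0 ∧ q.coeff (m + 1) ≠ 0 := by
  replace hq : IsWindowFit f (m + 1) (s + (0 : ℕ)) w q := by simpa using hq
  replace hp : IsWindowFit f m (s + (1 : ℕ)) v p := by simpa using hp
  have h₀ := hp.coeff_mul_sub_eq hq (c := 0) (r₀ := 0) (fun r _ _ => by omega) (by omega)
  have h₁ := hp.coeff_mul_sub_eq hq (c := 1) (r₀ := m + 1) (fun r _ _ => by omega) (by omega)
  rw [← sub_ne_zero] at hwv
  exact ⟨left_ne_zero_of_mul (h₀ ▸ hwv), left_ne_zero_of_mul (h₁ ▸ hwv)⟩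

theorem isWindowFit_zero (t : G) : IsWindowFit f 0 t (f t) 1 where
  natDegree_le := by simp
  eval_one := eval_one
  window_eq j hj := by simp [window, Nat.le_zero.mp hj]

theorem isWindowFit_one {α β : K} (t : G) (hαβ : α + β = 1) (h₀ : α * f t + β * f (t + 1) = v)
    (h₁ : α * f (t + 1) + β * f (t + 1 + 1) = v) : IsWindowFit f 1 t v (C α + C β * X) where
  natDegree_le := by compute_degree
  eval_one := by simpa using hαβ
  window_eq j hj := by
    interval_cases j
    · simpa [window, shift] using h₀
    · simpa [window, shift, add_assoc] using h₁

theorem IsWindowFit.natCast_mul_eq_sum {n : ℕ} [NeZero n] {f : ZMod n → K} {s : ZMod n}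
    (h : IsWindowFit f (n - 1) s v p) : (n : K) * v = ∑ x, f x := by
  have hconst : ∀ x, window p f x = v := fun x => by
    simpa using h.window_eq (x - s).val (Nat.le_sub_one_of_lt (ZMod.val_lt _))
  simpa [hconst, h.eval_one] using sum_window p f

/-- `[a, b, c, d, e, f] = -1`, with the denominators of the six-point cross ratio cleared. -/
def IsNegCrossRatio (a b c d e f : K) : Prop :=
  (a - b) * (c - d) * (e - f) = -((b - c) * (d - e) * (f - a))

/-- `[∞, b, c, d, e, f] = -1`. -/
def IsNegCrossRatioInf (b c d e f : K) : Prop :=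
  (c - d) * (e - f) = (b - c) * (d - e)

section CrossRatio

variable {x b l r z : K}

theorem ne_zero_of_forall_mul_eq_imp_eq {e c : K} (hz : e * z = c) (hu : ∀ w, e * w = c → w = z) :
    e ≠ 0 := by
  rintro rfl
  have := hu (z + 1) (by rwa [zero_mul] at hz ⊢)
  simp at this

theorem isNegCrossRatio_iff :
    IsNegCrossRatio x b l z b r ↔
      ((b - l) * (r - x) - (x - b) * (b - r)) * z =
        (b - l) * (r - x) * b - (x - b) * (b - r) * l := by
  unfold IsNegCrossRatio
  constructor <;> intro h <;> linear_combination h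

theorem isNegCrossRatioInf_iff :
    IsNegCrossRatioInf b l z b r ↔ ((b - l) + (b - r)) * z = b * b - l * r := by
  unfold IsNegCrossRatioInf
  constructor <;> intro h <;> linear_combination -h

theorem isNegCrossRatio_self_iff :
    IsNegCrossRatio x b l b b r ↔ (x - b) * (l - b) * (b - r) = 0 := by
  simp [IsNegCrossRatio]

theorem isNegCrossRatioInf_self_iff : IsNegCrossRatioInf b l b b r ↔ (l - b) * (b - r) = 0 := by
  simp [IsNegCrossRatioInf]

/-- With `λ = (b - x) (b - l) (b - r) / den`, the weights are `a = λ / (b - l)`,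
`c = λ / (b - r)` and `d = -λ / (b - x)`. -/
theorem IsNegCrossRatio.exists_weights (h : IsNegCrossRatio x b l z b r)
    (hden : (b - l) * (r - x) - (x - b) * (b - r) ≠ 0) :
    ∃ a c d : K, a + c + d = 1 ∧ a * (b - l) + d * (b - x) = 0 ∧
      c * (b - r) + d * (b - x) = 0 ∧ z = a * l + c * r + d * x := by
  rw [isNegCrossRatio_iff] at h
  set D := (b - l) * (r - x) - (x - b) * (b - r) with hD
  refine ⟨(b - x) * (b - r) / D, (b - x) * (b - l) / D, -((b - l) * (b - r)) / D,
    ?_, ?_, ?_, ?_⟩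
  · rw [← add_div, ← add_div, div_eq_one_iff_eq hden, hD]; ring
  · field_simp; ring
  · field_simp; ring
  · field_simp
    linear_combination h

theorem IsNegCrossRatioInf.exists_weights (h : IsNegCrossRatioInf b l z b r)
    (hden : (b - l) + (b - r) ≠ 0) :
    ∃ α β : K, α + β = 1 ∧ α * l + β * b = z ∧ α * b + β * r = z := by
  rw [isNegCrossRatioInf_iff] at h
  refine ⟨(b - r) / ((b - l) + (b - r)), (b - l) / ((b - l) + (b - r)), ?_, ?_, ?_⟩
  · field_simp; ring
  · field_simp; linear_combination -h
  · field_simp; linear_combination -h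

end CrossRatio

def RowFits (f : G → K) (k : ℕ) (Y : G → K) : Prop :=
  ∀ i, ∃ p, IsWindowFit f k (i - k) (Y i) p

theorem rowFits_zero (f : G → K) : RowFits f 0 f :=
  fun i => ⟨1, by simpa using isWindowFit_zero (f := f) i⟩

def IsLowerPentagramStep (X Y Z : G → K) : Prop :=
  ∀ i, IsNegCrossRatio (X i) (Y i) (Y (i - 1)) (Z i) (Y i) (Y (i + 1)) ∧
    ∀ z, IsNegCrossRatio (X i) (Y i) (Y (i - 1)) z (Y i) (Y (i + 1)) → z = Z i

def IsLowerPentagramStepFromInf (Y Z : G → K) : Prop :=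
  ∀ i, IsNegCrossRatioInf (Y i) (Y (i - 1)) (Z i) (Y i) (Y (i + 1)) ∧
    ∀ z, IsNegCrossRatioInf (Y i) (Y (i - 1)) z (Y i) (Y (i + 1)) → z = Z i

theorem ne_sub_one_of_forall_ne_add_one {α : Type*} {Y : G → α} (hY : ∀ j, Y j ≠ Y (j + 1))
    (i : G) : Y (i - 1) ≠ Y i := by
  simpa using hY (i - 1)

namespace IsLowerPentagramStepFromInf

variable {Y Z : G → K}

theorem den_ne_zero (h : IsLowerPentagramStepFromInf Y Z) (i : G) :
    (Y i - Y (i - 1)) + (Y i - Y (i + 1)) ≠ 0 :=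
  ne_zero_of_forall_mul_eq_imp_eq (isNegCrossRatioInf_iff.mp (h i).1)
    fun w hw => (h i).2 w (isNegCrossRatioInf_iff.mpr hw)

theorem apply_eq_of_eq (h : IsLowerPentagramStepFromInf Y Z) {i : G}
    (hi : Y (i - 1) = Y i ∨ Y (i + 1) = Y i) : Z i = Y i :=
  ((h i).2 _ (isNegCrossRatioInf_self_iff.mpr (by rcases hi with hi | hi <;> simp [hi]))).symm

theorem apply_ne (h : IsLowerPentagramStepFromInf Y Z) (hY : ∀ j, Y j ≠ Y (j + 1)) (i : G) :
    Z i ≠ Y i := by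
  intro hz
  have := isNegCrossRatioInf_self_iff.mp (hz ▸ (h i).1)
  simp [sub_eq_zero, hY i, ne_sub_one_of_forall_ne_add_one hY i] at this

theorem rowFits_one (h : IsLowerPentagramStepFromInf Y Z) : RowFits Y 1 Z := by
  intro i
  obtain ⟨α, β, hαβ, h₀, h₁⟩ := (h i).1.exists_weights (h.den_ne_zero i)
  exact ⟨_, isWindowFit_one (i - (1 : ℕ)) hαβ (by simpa using h₀) (by simpa using h₁)⟩

end IsLowerPentagramStepFromInf

namespace IsLowerPentagramStep

variable {X Y Z W : G → K}

theorem den_ne_zero (h : IsLowerPentagramStep X Y Z) (i : G) :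
    (Y i - Y (i - 1)) * (Y (i + 1) - X i) - (X i - Y i) * (Y i - Y (i + 1)) ≠ 0 :=
  ne_zero_of_forall_mul_eq_imp_eq (isNegCrossRatio_iff.mp (h i).1)
    fun w hw => (h i).2 w (isNegCrossRatio_iff.mpr hw)

theorem apply_eq_of_eq (h : IsLowerPentagramStep X Y Z) {i : G}
    (hi : Y (i - 1) = Y i ∨ Y (i + 1) = Y i) : Z i = Y i :=
  ((h i).2 _ (isNegCrossRatio_self_iff.mpr (by rcases hi with hi | hi <;> simp [hi]))).symm

theorem apply_ne (h : IsLowerPentagramStep X Y Z) (hY : ∀ j, Y j ≠ Y (j + 1)) {i : G}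
    (hXY : X i ≠ Y i) : Z i ≠ Y i := by
  intro hz
  have := isNegCrossRatio_self_iff.mp (hz ▸ (h i).1)
  simp [sub_eq_zero, hXY, hY i, ne_sub_one_of_forall_ne_add_one hY i] at this

/-- If `Y` took equal values at `i` and `i + 1`, both would persist in `Z`, and the cross ratio
condition defining `W (i + 1)` would hold for every `z`. -/
theorem apply_ne_apply_add_one (h : IsLowerPentagramStep Y Z W)
    (hYZ : ∀ i, Y (i - 1) = Y i ∨ Y (i + 1) = Y i → Z i = Y i) (i : G) : Y i ≠ Y (i + 1) := by
  intro heq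
  have h₁ : Z (i + 1) = Y (i + 1) := hYZ (i + 1) (Or.inl (by rw [add_sub_cancel_right, heq]))
  have h₀ : Z i = Y i := hYZ i (Or.inr heq.symm)
  apply h.den_ne_zero (i + 1)
  rw [add_sub_cancel_right, h₀, h₁, heq]
  ring

theorem rowFits {m : ℕ} (h : IsLowerPentagramStep X Y Z) (hX : RowFits f m X)
    (hY : RowFits f (m + 1) Y) (hXY : ∀ i, Y i ≠ X i) : RowFits f (m + 2) Z := by
  intro i
  set s := i - 1 - ((m + 1 : ℕ) : G) with hs
  obtain ⟨pW, hW⟩ := hY (i - 1)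
  obtain ⟨pC, hC⟩ := hY i
  obtain ⟨pE, hE⟩ := hY (i + 1)
  obtain ⟨pS, hS⟩ := hX i
  rw [show i - ((m + 1 : ℕ) : G) = s + 1 by rw [hs]; abel] at hC
  rw [show i + 1 - ((m + 1 : ℕ) : G) = s + 2 by rw [hs, ← one_add_one_eq_two]; abel] at hE
  rw [show i - (m : G) = s + 2 by rw [hs, ← one_add_one_eq_two]; push_cast; abel] at hS
  obtain ⟨hC₀, hC₁⟩ := hC.coeff_ne_zero (by rwa [add_assoc, one_add_one_eq_two]) (hXY i)
  obtain ⟨a, c, d, habd, hWS, hES, hZ⟩ := (h i).1.exists_weights (h.den_ne_zero i)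
  rw [show i - ((m + 2 : ℕ) : G) = s by rw [hs]; push_cast; rw [← one_add_one_eq_two]; abel, hZ]
  exact ⟨_, hW.step hC hE hS hC₀ hC₁ habd hWS hES⟩

end IsLowerPentagramStep

structure IsLowerPentagramOrbit (Y : ℕ → G → K) (N : ℕ) : Prop where
  first : IsLowerPentagramStepFromInf (Y 0) (Y 1)
  step : ∀ k, 1 ≤ k → k ≤ N → IsLowerPentagramStep (Y (k - 1)) (Y k) (Y (k + 1))

namespace IsLowerPentagramOrbit

variable {Y : ℕ → G → K} {N k : ℕ}

theorem step_succ (hY : IsLowerPentagramOrbit Y N) (hk : k + 1 ≤ N) :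
    IsLowerPentagramStep (Y k) (Y (k + 1)) (Y (k + 2)) := by
  simpa using hY.step (k + 1) (by omega) hk

theorem succ_apply_eq (hY : IsLowerPentagramOrbit Y N) (hk : k ≤ N) {i : G}
    (hi : Y k (i - 1) = Y k i ∨ Y k (i + 1) = Y k i) : Y (k + 1) i = Y k i := by
  cases k with
  | zero => exact hY.first.apply_eq_of_eq hi
  | succ k => exact (hY.step_succ hk).apply_eq_of_eq hi

theorem apply_ne_apply_add_one (hY : IsLowerPentagramOrbit Y N) (hk : k + 1 ≤ N) (i : G) :
    Y k i ≠ Y k (i + 1) :=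
  (hY.step_succ hk).apply_ne_apply_add_one (fun _ => hY.succ_apply_eq (by omega)) i

theorem succ_apply_ne (hY : IsLowerPentagramOrbit Y N) (hk : k + 1 ≤ N) (i : G) :
    Y (k + 1) i ≠ Y k i := by
  induction k generalizing i with
  | zero => exact hY.first.apply_ne (hY.apply_ne_apply_add_one hk) i
  | succ k ih =>
    exact (hY.step_succ (by omega)).apply_ne (hY.apply_ne_apply_add_one hk) (ih (by omega) i).symm

theorem rowFits (hY : IsLowerPentagramOrbit Y N) (hk : k ≤ N + 1) : RowFits (Y 0) k (Y k) := by
  suffices h : ∀ k ≤ N, RowFits (Y 0) k (Y k) ∧ RowFits (Y 0) (k + 1) (Y (k + 1)) by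
    rcases k with _ | k
    · exact (h 0 (Nat.zero_le _)).1
    · exact (h k (by omega)).2
  intro k hk
  induction k with
  | zero => exact ⟨rowFits_zero _, hY.first.rowFits_one⟩
  | succ k ih =>
    obtain ⟨hk₀, hk₁⟩ := ih (by omega)
    exact ⟨hk₁, (hY.step_succ hk).rowFits hk₀ hk₁ (hY.succ_apply_ne hk)⟩

end IsLowerPentagramOrbit

theorem sum_fin_natCast {M : Type*} [AddCommMonoid M] {n : ℕ} [NeZero n] (g : ZMod n → M) :
    ∑ j : Fin n, g (j : ℕ) = ∑ x, g x :=
  Fintype.sum_bijective _ ((Fintype.bijective_iff_surjective_and_card _).mpr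
    ⟨fun x => ⟨⟨x.val, x.val_lt⟩, x.natCast_zmod_val⟩, by simp⟩) _ _ fun _ => rfl

end LowerPentagram

end

open LowerPentagram

/-- **Theorem (collapse of the lower pentagram map).** Starting from the axis-aligned pair
`(∞, B)` and iterating the lower pentagram map `T₁` (expressed via the six-point cross ratio
conditions, degenerate in the first step since the top row is `∞`), the row `Y^{n-1}` is
constant, equal to the center of mass of `B`. -/
theorem lower_pentagram_collapse_to_center_of_mass
    (n : ℕ) (hn : 2 ≤ n)
    (B : ZMod n → ℝ)
    (Y : ℕ → ZMod n → ℝ)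
    (hstart : Y 0 = B)
    (hfirst : ∀ i : ZMod n,
      (B (i - 1) - Y 1 i) * (B i - B (i + 1)) = (B i - B (i - 1)) * (Y 1 i - B i) ∧
      ∀ z : ℝ, (B (i - 1) - z) * (B i - B (i + 1)) = (B i - B (i - 1)) * (z - B i) →
        z = Y 1 i)
    (hstep : ∀ k, 1 ≤ k → k ≤ n - 2 → ∀ i : ZMod n,
      ((Y (k - 1) i - Y k i) * (Y k (i - 1) - Y (k + 1) i) * (Y k i - Y k (i + 1)) =
          -((Y k i - Y k (i - 1)) * (Y (k + 1) i - Y k i) * (Y k (i + 1) - Y (k - 1) i)) ∧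
        ∀ z : ℝ,
          (Y (k - 1) i - Y k i) * (Y k (i - 1) - z) * (Y k i - Y k (i + 1)) =
            -((Y k i - Y k (i - 1)) * (z - Y k i) * (Y k (i + 1) - Y (k - 1) i)) →
          z = Y (k + 1) i)) :
    ∀ i : ZMod n, Y (n - 1) i = (1 / (n : ℝ)) * ∑ j : Fin n, B ((j : ℕ) : ZMod n) := by
  subst hstart
  have hY : IsLowerPentagramOrbit Y (n - 2) := ⟨hfirst, hstep⟩
  have : NeZero n := ⟨by omega⟩
  intro i
  obtain ⟨p, hp⟩ := hY.rowFits (k := n - 1) (by omega) i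
  rw [sum_fin_natCast, ← hp.natCast_mul_eq_sum]
  field_simp
end

section
/- Let n ≥ 2 and let X, Y : ℤ/n → ℝ² be such that for every i ∈ ℤ/n: X(i) ≠ r(X(i+1)), X(i−1) ≠ r(X(i)), the line through X(i) and r(X(i+1)) is distinct from the line through X(i−1) and r(X(i)), Y(i) lies on both of these lines (i.e. Y is the image of X under the mirror pentagram map), and moreover Y(i) ≠ Y(i+1). Then the mirror pentagram map is inverted by the intersection construction of the paper: for every i ∈ ℤ/n, the point X(i) lies both on the line through Y(i) and Y(i+1) and on the line through r(Y(i−1)) and r(Y(i)). -/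
/-
`Y i` and `Y (i + 1)` both lie on the line through `X i` and `r (X (i + 1))`; being distinct,
they span it, so their line contains `X i`. The second claim is the same argument, after
reflecting, for `Y (i - 1)` and `Y i` on the line through `X (i - 1)` and `r (X i)`.
-/

/-- Reflection of the plane about the `x`-axis. -/
def mirrorReflect (p : Fin 2 → ℝ) : Fin 2 → ℝ := ![p 0, -p 1]

theorem AffineMap.apply_mem_affineSpan_pair {k V₁ P₁ V₂ P₂ : Type*} [Ring k]
    [AddCommGroup V₁] [Module k V₁] [AddTorsor V₁ P₁] [AddCommGroup V₂] [Module k V₂]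
    [AddTorsor V₂ P₂] (f : P₁ →ᵃ[k] P₂) {a b p : P₁} (hp : p ∈ line[k, a, b]) :
    f p ∈ line[k, f a, f b] := by
  obtain ⟨r, rfl⟩ := mem_affineSpan_pair_iff_exists_lineMap_eq.mp hp
  rw [AffineMap.apply_lineMap]
  exact AffineMap.lineMap_mem_affineSpan_pair r _ _

theorem mem_affineSpan_pair_of_mem_affineSpan_pair {k V P : Type*} [DivisionRing k]
    [AddCommGroup V] [Module k V] [AddTorsor V P] {a b p q x : P} (hpq : p ≠ q)
    (hp : p ∈ line[k, a, b]) (hq : q ∈ line[k, a, b]) (hx : x ∈ line[k, a, b]) :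
    x ∈ line[k, p, q] :=
  (collinear_triple_of_mem_affineSpan_pair hp hq hx).mem_affineSpan_of_mem_of_ne
    (by simp) (by simp) (by simp) hpq

@[simp]
theorem mirrorReflect_mirrorReflect (p : Fin 2 → ℝ) : mirrorReflect (mirrorReflect p) = p := by
  ext i
  fin_cases i <;> simp [mirrorReflect]

theorem mirrorReflect_injective : Function.Injective mirrorReflect :=
  Function.Involutive.injective mirrorReflect_mirrorReflect

def mirrorLinearMap : (Fin 2 → ℝ) →ₗ[ℝ] (Fin 2 → ℝ) where
  toFun := mirrorReflect
  map_add' p q := by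
    ext i
    fin_cases i <;> simp [mirrorReflect]
    ring
  map_smul' c p := by
    ext i
    fin_cases i <;> simp [mirrorReflect]

theorem mirrorReflect_mem_affineSpan_pair {a b p : Fin 2 → ℝ} (hp : p ∈ line[ℝ, a, b]) :
    mirrorReflect p ∈ line[ℝ, mirrorReflect a, mirrorReflect b] :=
  mirrorLinearMap.toAffineMap.apply_mem_affineSpan_pair hp

theorem mirror_pentagram_inverse_general
    (n : ℕ)
    (X Y : ZMod n → (Fin 2 → ℝ))
    (h : ∀ i : ZMod n,
      X i ≠ mirrorReflect (X (i + 1)) ∧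
      X (i - 1) ≠ mirrorReflect (X i) ∧
      affineSpan ℝ {X i, mirrorReflect (X (i + 1))} ≠
        affineSpan ℝ {X (i - 1), mirrorReflect (X i)} ∧
      Y i ∈ affineSpan ℝ {X i, mirrorReflect (X (i + 1))} ∧
      Y i ∈ affineSpan ℝ {X (i - 1), mirrorReflect (X i)} ∧
      Y i ≠ Y (i + 1)) :
    ∀ i : ZMod n,
      X i ∈ affineSpan ℝ {Y i, Y (i + 1)} ∧
      X i ∈ affineSpan ℝ {mirrorReflect (Y (i - 1)), mirrorReflect (Y i)} := by
  have hY (j : ZMod n) : Y j ∈ line[ℝ, X j, mirrorReflect (X (j + 1))] := (h j).2.2.2.1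
  have hY_succ (j : ZMod n) : Y (j + 1) ∈ line[ℝ, X j, mirrorReflect (X (j + 1))] := by
    simpa using (h (j + 1)).2.2.2.2.1
  intro i
  refine ⟨mem_affineSpan_pair_of_mem_affineSpan_pair (h i).2.2.2.2.2 (hY i) (hY_succ i)
    (left_mem_affineSpan_pair ℝ _ _), ?_⟩
  have hrY := mirrorReflect_mem_affineSpan_pair (hY (i - 1))
  have hrY_succ := mirrorReflect_mem_affineSpan_pair (hY_succ (i - 1))
  have hne := mirrorReflect_injective.ne (h (i - 1)).2.2.2.2.2
  simp only [sub_add_cancel, mirrorReflect_mirrorReflect] at hrY hrY_succ hne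
  exact mem_affineSpan_pair_of_mem_affineSpan_pair hne hrY hrY_succ
    (right_mem_affineSpan_pair ℝ _ _)

/-- **Lemma (the mirror pentagram map has an inverse).** If `Y` is the image of `X` under the
mirror pentagram map (with all the relevant points distinct and lines distinct), and moreover
`Y(i) ≠ Y(i+1)` for all `i`, then `X(i)` lies on the line through `Y(i)` and `Y(i+1)` and on
the line through `r(Y(i-1))` and `r(Y(i))`. -/
theorem mirror_pentagram_inverse
    (n : ℕ) (hn : 2 ≤ n)
    (X Y : ZMod n → (Fin 2 → ℝ))
    (h : ∀ i : ZMod n,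
      X i ≠ mirrorReflect (X (i + 1)) ∧
      X (i - 1) ≠ mirrorReflect (X i) ∧
      affineSpan ℝ {X i, mirrorReflect (X (i + 1))} ≠
        affineSpan ℝ {X (i - 1), mirrorReflect (X i)} ∧
      Y i ∈ affineSpan ℝ {X i, mirrorReflect (X (i + 1))} ∧
      Y i ∈ affineSpan ℝ {X (i - 1), mirrorReflect (X i)} ∧
      Y i ≠ Y (i + 1)) :
    ∀ i : ZMod n,
      X i ∈ affineSpan ℝ {Y i, Y (i + 1)} ∧
      X i ∈ affineSpan ℝ {mirrorReflect (Y (i - 1)), mirrorReflect (Y i)} :=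
  mirror_pentagram_inverse_general n X Y h
end

section
/- Let P₀, P₁, P₂ ∈ ℝ² and write r(x,y) = (x,−y). Suppose D ∈ ℝ² lies on both the line through P₁ and P₂ and the line through r(P₀) and r(P₁), where P₁ ≠ P₂, r(P₀) ≠ r(P₁), and these two lines are distinct (D is the inverse mirror pentagram point). Suppose E ∈ ℝ² lies on both the line through P₁ and r(P₂) and the line through P₀ and r(P₁), where P₁ ≠ r(P₂), P₀ ≠ r(P₁), and these two lines are distinct (E is the mirror pentagram point). Writing x(·) for the first coordinate of a point of ℝ², the six first coordinates satisfy the lower pentagram map relation: (x(D) − x(P₁))·(x(P₀) − x(E))·(x(P₁) − x(P₂)) = −(x(P₁) − x(P₀))·(x(E) − x(P₁))·(x(P₂) − x(D)), i.e. the six-point cross ratio [x(D), x(P₁), x(P₀), x(E), x(P₁), x(P₂)] equals −1. -/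
open AffineMap Affine

section

variable {K : Type*} [Field K]

theorem det_ne_zero_of_mem_affineSpan_pair_of_ne {a b c d p : Fin 2 → K} (hab : a ≠ b)
    (hcd : c ≠ d) (hne : line[K, a, b] ≠ line[K, c, d]) (hpab : p ∈ line[K, a, b])
    (hpcd : p ∈ line[K, c, d]) : (Matrix.of ![b - a, d - c]).det ≠ 0 := by
  intro hdet
  have hdep : ¬LinearIndependent K ![b - a, d - c] := by
    intro hli
    have hunit := (Matrix.linearIndependent_rows_iff_isUnit (A := Matrix.of ![b - a, d - c])).mp hli
    rw [Matrix.isUnit_iff_isUnit_det, hdet] at hunit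
    exact not_isUnit_zero hunit
  obtain ⟨z, hz⟩ : ∃ z : K, z • (d - c) = b - a := by
    simpa [linearIndependent_fin2, sub_ne_zero.mpr hcd.symm] using hdep
  have hz0 : z ≠ 0 := by
    rintro rfl
    exact hab (sub_eq_zero.mp (by simpa using hz.symm)).symm
  have hpar : line[K, a, b] ∥ line[K, c, d] :=
    AffineSubspace.affineSpan_pair_parallel_iff_exists_unit_smul.mpr ⟨Units.mk0 z hz0, hz⟩
  exact hne (AffineSubspace.ext_of_direction_eq hpar.direction_eq ⟨p, hpab, hpcd⟩)

theorem mul_det_eq_det_of_lineMap_mem_affineSpan_pair {a b c d : Fin 2 → K} {t : K}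
    (h : lineMap a b t ∈ line[K, c, d]) :
    t * (Matrix.of ![b - a, d - c]).det = (Matrix.of ![c - a, d - c]).det := by
  obtain ⟨s, hs⟩ := mem_affineSpan_pair_iff_exists_lineMap_eq.mp h
  have h0 := congrFun hs 0
  have h1 := congrFun hs 1
  simp only [lineMap_apply_module', Pi.add_apply, Pi.smul_apply, Pi.sub_apply, smul_eq_mul]
    at h0 h1
  simp only [Matrix.det_fin_two, Matrix.of_apply, Matrix.cons_val_zero, Matrix.cons_val_one,
    Pi.sub_apply]
  linear_combination (d 0 - c 0) * h1 - (d 1 - c 1) * h0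

end

/-- `1/t + 1/u = (α + β)/c = w/b`, with denominators cleared. -/
theorem add_mul_eq_mul_mul_of_mul_eq {R : Type*} [CommRing R] [IsDomain R]
    {α β b c t u w : R} (hα : α ≠ 0) (hβ : β ≠ 0) (ht : t * α = c) (hu : u * β = c)
    (hsum : b * (α + β) = c * w) :
    (t + u) * b = t * u * w := by
  apply mul_right_cancel₀ (mul_ne_zero hα hβ)
  linear_combination (b * β - u * β * w) * ht + (b * α - c * w) * hu + c * hsum

/-- **Lemma (one step: mirror pentagram map projects to the lower pentagram map).**
If `D` is the inverse mirror pentagram point of `P₀, P₁, P₂` and `E` is their mirror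
pentagram point, then the six first coordinates satisfy the six-point cross ratio relation
`[x(D), x(P₁), x(P₀), x(E), x(P₁), x(P₂)] = -1`. -/
theorem mirror_pentagram_projects_to_lower_pentagram
    (P₀ P₁ P₂ D E : Fin 2 → ℝ)
    (hD1 : P₁ ≠ P₂)
    (hD2 : mirrorReflect P₀ ≠ mirrorReflect P₁)
    (hD3 : affineSpan ℝ {P₁, P₂} ≠ affineSpan ℝ {mirrorReflect P₀, mirrorReflect P₁})
    (hD4 : D ∈ affineSpan ℝ {P₁, P₂})
    (hD5 : D ∈ affineSpan ℝ {mirrorReflect P₀, mirrorReflect P₁})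
    (hE1 : P₁ ≠ mirrorReflect P₂)
    (hE2 : P₀ ≠ mirrorReflect P₁)
    (hE3 : affineSpan ℝ {P₁, mirrorReflect P₂} ≠ affineSpan ℝ {P₀, mirrorReflect P₁})
    (hE4 : E ∈ affineSpan ℝ {P₁, mirrorReflect P₂})
    (hE5 : E ∈ affineSpan ℝ {P₀, mirrorReflect P₁}) :
    (D 0 - P₁ 0) * (P₀ 0 - E 0) * (P₁ 0 - P₂ 0) =
      -((P₁ 0 - P₀ 0) * (E 0 - P₁ 0) * (P₂ 0 - D 0)) := by
  have hdetD := det_ne_zero_of_mem_affineSpan_pair_of_ne hD1 hD2 hD3 hD4 hD5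
  have hdetE := det_ne_zero_of_mem_affineSpan_pair_of_ne hE1 hE2 hE3 hE4 hE5
  obtain ⟨t, rfl⟩ := mem_affineSpan_pair_iff_exists_lineMap_eq.mp hD4
  obtain ⟨u, rfl⟩ := mem_affineSpan_pair_iff_exists_lineMap_eq.mp hE4
  have ht := mul_det_eq_det_of_lineMap_mem_affineSpan_pair hD5
  have hu := mul_det_eq_det_of_lineMap_mem_affineSpan_pair hE5
  simp only [Matrix.det_fin_two, Matrix.of_apply, Matrix.cons_val_zero, Matrix.cons_val_one,
    Pi.sub_apply, mirrorReflect, lineMap_apply_module', Pi.add_apply, Pi.smul_apply, smul_eq_mul]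
    at hdetD hdetE ht hu ⊢
  have hparams := add_mul_eq_mul_mul_of_mul_eq (b := P₁ 0 - P₀ 0) (w := 2 * P₁ 0 - P₀ 0 - P₂ 0)
    hdetD hdetE ht (hu.trans (by ring)) (by ring)
  linear_combination (P₂ 0 - P₁ 0) ^ 2 * hparams
end

section
/- Let V₂, X₁, X₃, Y₀, Y₂, Y₄, Z₁, Z₃, W₂ be real numbers arranged in the diamond pattern of a cross ratio frieze, and assume each bottom entry is the unique solution of its diamond relation; that is: Y₂ is the unique real z with (V₂ − X₁)·(z − X₃) = −(X₁ − z)·(X₃ − V₂); Z₁ is the unique real z with (X₁ − Y₀)·(z − Y₂) = −(Y₀ − z)·(Y₂ − X₁); Z₃ is the unique real z with (X₃ − Y₂)·(z − Y₄) = −(Y₂ − z)·(Y₄ − X₃); and W₂ is the unique real z with (Y₂ − Z₁)·(z − Z₃) = −(Z₁ − z)·(Z₃ − Y₂). Then the six-point cross ratio condition [V₂, Y₂, Y₀, W₂, Y₂, Y₄] = −1 holds, i.e. (V₂ − Y₂)·(Y₀ − W₂)·(Y₂ − Y₄) = −(Y₂ − Y₀)·(W₂ − Y₂)·(Y₄ −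 V₂). (Hence two vertical steps in a cross ratio frieze pattern realize one step of the lower pentagram map.) -/
/-!
Translate so that `Y₂ = 0` and pass to reciprocals, i.e. send `Y₂` to infinity. Then every
relation becomes affine: `1/V₂` is the midpoint of `1/X₁, 1/X₃`, `1/Y₀` that of `1/X₁, 1/Z₁`,
`1/Y₄` that of `1/X₃, 1/Z₃`, and `1/W₂` that of `1/Z₁, 1/Z₃`, so that
`1/W₂ = 1/Y₀ + 1/Y₄ - 1/V₂`, which is the six-point relation with `Y₂` at infinity. Clearing
denominators turns this into a polynomial identity, valid as soon as `X₁ + X₃ ≠ 2 Y₂`; the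
uniqueness hypotheses exclude the degenerate configurations.
-/

variable {K : Type*} [Field K]

def CrossRatioEqNegOne (a b c d : K) : Prop :=
  (a - b) * (c - d) = -((b - c) * (d - a))

def SixPointCrossRatioEqNegOne (a b c d e f : K) : Prop :=
  (a - b) * (c - d) * (e - f) = -((b - c) * (d - e) * (f - a))

namespace CrossRatioEqNegOne

variable {a b c d : K}

/-- The relation is affine in `c` with leading coefficient `2 * a - b - d`. -/
theorem two_mul_sub_sub_ne_zero (h : CrossRatioEqNegOne a b c d)
    (huniq : ∀ z, CrossRatioEqNegOne a b z d → z = c) : 2 * a - b - d ≠ 0 := by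
  intro h0
  have hc : CrossRatioEqNegOne a b (c + 1) d := by
    unfold CrossRatioEqNegOne at h ⊢
    linear_combination h + h0
  simpa using huniq _ hc

theorem eq_of_add_eq [NeZero (2 : K)] (h : CrossRatioEqNegOne a b c d) (hbd : b + d = 2 * c) :
    b = c ∧ d = c := by
  unfold CrossRatioEqNegOne at h
  have hsq : 2 * (b - c) ^ 2 = 0 := by linear_combination (-1 : K) * h + (2 * b - c - a) * hbd
  have hb : b = c := by simpa [sub_eq_zero, two_ne_zero] using hsq
  exact ⟨hb, by linear_combination hbd - hb⟩

theorem eq_of_left_eq (h : CrossRatioEqNegOne a b c d) (hab : a = b ∨ a = d)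
    (hne : 2 * a - b - d ≠ 0) : c = a := by
  unfold CrossRatioEqNegOne at h
  have hprod : (c - a) * (2 * a - b - d) = 0 := by
    rcases hab with rfl | rfl <;> linear_combination h
  exact sub_eq_zero.mp ((mul_eq_zero.mp hprod).resolve_right hne)

end CrossRatioEqNegOne

theorem sixPointCrossRatioEqNegOne_of_frieze [NeZero (2 : K)] {V X₁ X₃ Y₀ Y₂ Y₄ Z₁ Z₃ W : K}
    (hY : CrossRatioEqNegOne V X₁ Y₂ X₃) (hZ₁ : CrossRatioEqNegOne X₁ Y₀ Z₁ Y₂)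
    (hZ₃ : CrossRatioEqNegOne X₃ Y₂ Z₃ Y₄) (hW : CrossRatioEqNegOne Y₂ Z₁ W Z₃)
    (h₁ : 2 * X₁ - Y₀ - Y₂ ≠ 0) (h₃ : 2 * X₃ - Y₂ - Y₄ ≠ 0) (hw : 2 * Y₂ - Z₁ - Z₃ ≠ 0) :
    SixPointCrossRatioEqNegOne V Y₂ Y₀ W Y₂ Y₄ := by
  have hX : X₁ + X₃ - 2 * Y₂ ≠ 0 := by
    intro hsum
    obtain ⟨rfl, rfl⟩ := hY.eq_of_add_eq (by linear_combination hsum)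
    have hZ₁Y₂ := hZ₁.eq_of_left_eq (Or.inr rfl) h₁
    have hZ₃Y₂ := hZ₃.eq_of_left_eq (Or.inl rfl) h₃
    exact hw (by linear_combination -hZ₁Y₂ - hZ₃Y₂)
  unfold CrossRatioEqNegOne at hY hZ₁ hZ₃ hW
  unfold SixPointCrossRatioEqNegOne
  -- `V - Y₂ = 2 (X₁ - Y₂) (X₃ - Y₂) / (X₁ + X₃ - 2 Y₂)`: clear this denominator
  apply mul_left_cancel₀ hX
  linear_combination -(2 * X₁ - Y₀ - Y₂) * (2 * X₃ - Y₂ - Y₄) * hW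
    - ((W - Y₂) - 2 * (Z₃ - Y₂)) * (2 * X₃ - Y₂ - Y₄) * hZ₁
    - ((W - Y₂) * (2 * X₁ - Y₀ - Y₂) - 2 * (X₁ - Y₂) * (Y₀ - Y₂)) * hZ₃
    - ((W - Y₂) * (Y₀ + Y₄ - 2 * Y₂) - (Y₀ - Y₂) * (Y₄ - Y₂)) * hY

/-- **Lemma (two frieze steps give one lower pentagram step).** If in a diamond pattern of a
cross ratio frieze each bottom entry is the unique solution of its diamond relation
(cross ratio `-1`), then the six-point cross ratio condition
`[V₂, Y₂, Y₀, W₂, Y₂, Y₄] = -1` holds. -/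
theorem frieze_two_steps_give_lower_pentagram
    (V₂ X₁ X₃ Y₀ Y₂ Y₄ Z₁ Z₃ W₂ : ℝ)
    (hY₂ : (V₂ - X₁) * (Y₂ - X₃) = -((X₁ - Y₂) * (X₃ - V₂)) ∧
      ∀ z : ℝ, (V₂ - X₁) * (z - X₃) = -((X₁ - z) * (X₃ - V₂)) → z = Y₂)
    (hZ₁ : (X₁ - Y₀) * (Z₁ - Y₂) = -((Y₀ - Z₁) * (Y₂ - X₁)) ∧
      ∀ z : ℝ, (X₁ - Y₀) * (z - Y₂) = -((Y₀ - z) * (Y₂ - X₁)) → z = Z₁)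
    (hZ₃ : (X₃ - Y₂) * (Z₃ - Y₄) = -((Y₂ - Z₃) * (Y₄ - X₃)) ∧
      ∀ z : ℝ, (X₃ - Y₂) * (z - Y₄) = -((Y₂ - z) * (Y₄ - X₃)) → z = Z₃)
    (hW₂ : (Y₂ - Z₁) * (W₂ - Z₃) = -((Z₁ - W₂) * (Z₃ - Y₂)) ∧
      ∀ z : ℝ, (Y₂ - Z₁) * (z - Z₃) = -((Z₁ - z) * (Z₃ - Y₂)) → z = W₂) :
    (V₂ - Y₂) * (Y₀ - W₂) * (Y₂ - Y₄) = -((Y₂ - Y₀) * (W₂ - Y₂) * (Y₄ - V₂)) :=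
  sixPointCrossRatioEqNegOne_of_frieze hY₂.1 hZ₁.1 hZ₃.1 hW₂.1
    (CrossRatioEqNegOne.two_mul_sub_sub_ne_zero hZ₁.1 hZ₁.2)
    (CrossRatioEqNegOne.two_mul_sub_sub_ne_zero hZ₃.1 hZ₃.2)
    (CrossRatioEqNegOne.two_mul_sub_sub_ne_zero hW₂.1 hW₂.2)
end

section
/- Let X₁, X₃, Y₀, Y₄ be real numbers and set Y₂ = (X₁ + X₃)/2 (the degenerate diamond condition below an entry ∞). Let Z₁ be the unique real z with (X₁ − Y₀)·(z − Y₂) = −(Y₀ − z)·(Y₂ − X₁), let Z₃ be the unique real z with (X₃ − Y₂)·(z − Y₄) = −(Y₂ − z)·(Y₄ − X₃), and let W₂ be the unique real z with (Y₂ − Z₁)·(z − Z₃) = −(Z₁ − z)·(Z₃ − Y₂). If X₁ + X₃ − Y₀ − Y₄ ≠ 0, then W₂ = ((X₁ + X₃)² − 4·Y₀·Y₄) / (4·(X₁ + X₃ − Y₀ − Y₄)). -/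
/-!
Read from a vertex, a harmonic quadruple is a statement about reciprocals: `[a, b, c, d] = -1`
says `2 / (c - a) = 1 / (b - a) + 1 / (d - a)` and, equivalently,
`1 / (c - d) = 2 / (b - d) - 1 / (a - d)`. Measure everything from `Y₂`. Then
`1 / (Z₁ - Y₂) = 2 / (Y₀ - Y₂) - 1 / (X₁ - Y₂)` and `1 / (Z₃ - Y₂) = 2 / (Y₄ - Y₂) - 1 / (X₃ - Y₂)`,
and since `Y₂` is the midpoint of `X₁` and `X₃` the last terms cancel in
`2 / (W₂ - Y₂) = 1 / (Z₁ - Y₂) + 1 / (Z₃ - Y₂)`. Hence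
`W₂ - Y₂ = (Y₀ - Y₂) (Y₄ - Y₂) / (Y₀ + Y₄ - 2 Y₂)`, which is the formula. With denominators
cleared, the argument only needs the three linear coefficients `2a - b - d` to be nonzero, and
this is what uniqueness of the solutions forces.
-/

variable {K : Type*} [Field K]

/-- The cross ratio condition `[a, b, c, d] = -1`, with denominators cleared. -/
def IsHarmonicQuadruple (a b c d : K) : Prop :=
  (a - b) * (c - d) = -((b - c) * (d - a))

namespace IsHarmonicQuadruple

variable {a b c d : K}

theorem two_mul_sub_sub_ne_zero_of_unique (h : IsHarmonicQuadruple a b c d)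
    (hu : ∀ z, IsHarmonicQuadruple a b z d → z = c) : 2 * a - b - d ≠ 0 := by
  intro h0
  have := hu (c + 1) (by unfold IsHarmonicQuadruple at h ⊢; linear_combination h + h0)
  simp at this

theorem sub_first_mul (h : IsHarmonicQuadruple a b c d) :
    (c - a) * (2 * a - b - d) = 2 * (a - b) * (d - a) := by
  unfold IsHarmonicQuadruple at h; linear_combination h

theorem sub_second_mul (h : IsHarmonicQuadruple a b c d) :
    (c - b) * (2 * a - b - d) = (a - b) * (d - b) := by
  unfold IsHarmonicQuadruple at h; linear_combination h

theorem sub_fourth_mul (h : IsHarmonicQuadruple a b c d) :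
    (c - d) * (2 * a - b - d) = (a - d) * (b - d) := by
  unfold IsHarmonicQuadruple at h; linear_combination h

end IsHarmonicQuadruple

theorem mul_add_eq_mul_of_harmonic_relations {d y₀ y₄ z₁ z₃ w : K}
    (h₁ : z₁ * (2 * d - y₀) = d * y₀) (h₃ : z₃ * (2 * d + y₄) = d * y₄)
    (hw : w * (z₁ + z₃) = 2 * z₁ * z₃) (hc₁ : 2 * d - y₀ ≠ 0) (hc₃ : 2 * d + y₄ ≠ 0)
    (hcw : z₁ + z₃ ≠ 0) :
    w * (y₀ + y₄) = y₀ * y₄ := by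
  set P := (2 * d - y₀) * (2 * d + y₄)
  have hsum : P * (z₁ + z₃) = 2 * d ^ 2 * (y₀ + y₄) := by
    linear_combination (2 * d + y₄) * h₁ + (2 * d - y₀) * h₃
  have hprod : P * (z₁ * z₃) = d ^ 2 * y₀ * y₄ := by
    linear_combination z₃ * (2 * d + y₄) * h₁ + d * y₀ * h₃
  have hd : 2 * d ^ 2 ≠ 0 := by
    intro h0
    rw [h0, zero_mul] at hsum
    exact mul_ne_zero (mul_ne_zero hc₁ hc₃) hcw hsum
  apply mul_left_cancel₀ hd
  linear_combination -w * hsum + P * hw + 2 * hprod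

theorem IsHarmonicQuadruple.sub_mul_eq_of_midpoint {x₁ x₃ y₀ y₂ y₄ z₁ z₃ w : K}
    (hy₂ : x₁ + x₃ = 2 * y₂) (h₁ : IsHarmonicQuadruple x₁ y₀ z₁ y₂)
    (h₃ : IsHarmonicQuadruple x₃ y₂ z₃ y₄) (hw : IsHarmonicQuadruple y₂ z₁ w z₃)
    (hc₁ : 2 * x₁ - y₀ - y₂ ≠ 0) (hc₃ : 2 * x₃ - y₂ - y₄ ≠ 0) (hcw : 2 * y₂ - z₁ - z₃ ≠ 0) :
    (w - y₂) * ((y₀ - y₂) + (y₄ - y₂)) = (y₀ - y₂) * (y₄ - y₂) := by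
  apply mul_add_eq_mul_of_harmonic_relations (d := x₁ - y₂) (z₁ := z₁ - y₂) (z₃ := z₃ - y₂)
  · linear_combination h₁.sub_fourth_mul
  · linear_combination -h₃.sub_second_mul + (2 * (z₃ - y₂) - (y₄ - y₂)) * hy₂
  · linear_combination -hw.sub_first_mul
  · contrapose! hc₁; linear_combination hc₁
  · contrapose! hc₃; linear_combination -hc₃ + 2 * hy₂
  · contrapose! hcw; linear_combination -hcw

/-- **Lemma (the explicit frieze formula).** In a cross ratio frieze pattern whose top row
is constantly `∞`, so that `Y₂ = (X₁+X₃)/2`, and with `Z₁`, `Z₃`, `W₂` the unique solutions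
of their diamond relations (cross ratio `-1`), one has
`W₂ = ((X₁+X₃)² − 4Y₀Y₄) / (4(X₁+X₃−Y₀−Y₄))`. -/
theorem frieze_explicit_formula
    (X₁ X₃ Y₀ Y₂ Y₄ Z₁ Z₃ W₂ : ℝ)
    (hY₂ : Y₂ = (X₁ + X₃) / 2)
    (hZ₁ : (X₁ - Y₀) * (Z₁ - Y₂) = -((Y₀ - Z₁) * (Y₂ - X₁)) ∧
      ∀ z : ℝ, (X₁ - Y₀) * (z - Y₂) = -((Y₀ - z) * (Y₂ - X₁)) → z = Z₁)
    (hZ₃ : (X₃ - Y₂) * (Z₃ - Y₄) = -((Y₂ - Z₃) * (Y₄ - X₃)) ∧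
      ∀ z : ℝ, (X₃ - Y₂) * (z - Y₄) = -((Y₂ - z) * (Y₄ - X₃)) → z = Z₃)
    (hW₂ : (Y₂ - Z₁) * (W₂ - Z₃) = -((Z₁ - W₂) * (Z₃ - Y₂)) ∧
      ∀ z : ℝ, (Y₂ - Z₁) * (z - Z₃) = -((Z₁ - z) * (Z₃ - Y₂)) → z = W₂)
    (h : X₁ + X₃ - Y₀ - Y₄ ≠ 0) :
    W₂ = ((X₁ + X₃) ^ 2 - 4 * Y₀ * Y₄) / (4 * (X₁ + X₃ - Y₀ - Y₄)) := by
  have key := IsHarmonicQuadruple.sub_mul_eq_of_midpoint (by linarith) hZ₁.1 hZ₃.1 hW₂.1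
    (IsHarmonicQuadruple.two_mul_sub_sub_ne_zero_of_unique hZ₁.1 hZ₁.2)
    (IsHarmonicQuadruple.two_mul_sub_sub_ne_zero_of_unique hZ₃.1 hZ₃.2)
    (IsHarmonicQuadruple.two_mul_sub_sub_ne_zero_of_unique hW₂.1 hW₂.2)
  subst hY₂
  rw [eq_div_iff (mul_ne_zero four_ne_zero h)]
  linear_combination -4 * key
end
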